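/- arXiv:1811.11333 — 4 statements merged into one kernel-verified Lean document; each statement's English description precedes it below -/
import Mathlib

section
/- A functor F : C → D is both an isofibration and an equivalence of categories if and only if it has the right lifting property with respect to the three boundary functors ∂₀ : ∅ → [0], ∂₁ : ∂[1] → [1], and ∂₂ : ∂[2] → [2]. -/
open CategoryTheory

/-- A functor `F : C ⥤ D` is an *isofibration* if every isomorphism in `D` with source
`F(c)` lifts to an isomorphism in `C` with source `c`. -/
def CategoryTheory.Functor.Isofib {C D : Type*} [Category C] [Category D] (F : C ⥤ D) : Prop :=
  ∀ (c : C) (d : D) (v : F.obj c ≅ d), ∃ (c' : C) (u : c ≅ c') (h : F.obj c' = d),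
    F.map u.hom = v.hom ≫ eqToHom h.symm

/-- The boundary functor `∂₀ : ∅ → [0]`. -/
def boundaryZero : Discrete PEmpty.{1} ⥤ Discrete PUnit := Functor.empty _

/-- The boundary functor `∂₁ : ∂[1] → [1]`, the identity on objects, from the discrete
category `{0, 1}` to the arrow category `0 → 1` (here `Fin 2` with its order category
structure). -/
def boundaryOne : Discrete (Fin 2) ⥤ Fin 2 := Discrete.functor (fun i => i)

/-- The generating edges of the category `∂[2]`: arrows `f₀₁ : 0 → 1`, `f₁₂ : 1 → 2` and an
extra arrow `f₀₂ : 0 → 2`. -/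
inductive BoundaryTwoEdge : Fin 3 → Fin 3 → Type
  | f01 : BoundaryTwoEdge 0 1
  | f12 : BoundaryTwoEdge 1 2
  | f02 : BoundaryTwoEdge 0 2

/-- The underlying quiver of `∂[2]`. -/
def BQuiv : Type := Fin 3

instance : Quiver BQuiv := ⟨BoundaryTwoEdge⟩

/-- `∂[2]` is the free category on the quiver with arrows `f₀₁, f₁₂, f₀₂`; it has exactly two
arrows `0 → 2`, namely `f₀₂` and the composite `f₁₂ ∘ f₀₁`. -/
abbrev BoundaryTwo : Type := Paths BQuiv

/-- The boundary functor `∂₂ : ∂[2] → [2]`, the identity on objects, sending both `f₀₂` and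
`f₁₂ ∘ f₀₁` to the composite `0 → 2` in `[2]` (here `Fin 3` with its order category). -/
def boundaryTwo : BoundaryTwo ⥤ Fin 3 :=
  Paths.lift
    { obj := fun i => i
      map := fun e =>
        match e with
        | .f01 => homOfLE (by decide)
        | .f12 => homOfLE (by decide)
        | .f02 => homOfLE (by decide) }

/-!
Each boundary functor detects one property of `F`: lifting against `∂₀` is surjectivity on
objects, against `∂₁` fullness, and against `∂₂` faithfulness, since a functor `∂[2] ⥤ C`
extends along `∂₂` exactly when it sends `f₀₂` to the composite of the images of `f₀₁` and `f₁₂`,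
and `∂₂` is an epimorphism of categories. On the other side, an isofibration that is
essentially surjective is surjective on objects (lift `F c ≅ d`), and a fully faithful functor
that is surjective on objects is an isofibration (lift isomorphisms with `preimageIso`).
-/

namespace CategoryTheory

universe v u

theorem Cat.hasLiftingProperty_toCatHom_iff {A B X Y : Type u} [Category.{v} A] [Category.{v} B]
    [Category.{v} X] [Category.{v} Y] (i : A ⥤ B) (p : X ⥤ Y) :
    HasLiftingProperty i.toCatHom p.toCatHom ↔
      ∀ (f : A ⥤ X) (g : B ⥤ Y), f ⋙ p = i ⋙ g → ∃ l : B ⥤ X, i ⋙ l = f ∧ l ⋙ p = g := by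
  constructor
  · intro h f g w
    obtain ⟨⟨l, hl₁, hl₂⟩⟩ :=
      (h.sq_hasLift (f := f.toCatHom) (g := g.toCatHom) ⟨congrArg Functor.toCatHom w⟩).exists_lift
    exact ⟨l.toFunctor, congrArg Cat.Hom.toFunctor hl₁, congrArg Cat.Hom.toFunctor hl₂⟩
  · refine fun h => ⟨fun {f g} sq => ?_⟩
    obtain ⟨l, hl₁, hl₂⟩ := h f.toFunctor g.toFunctor (congrArg Cat.Hom.toFunctor sq.w)
    exact ⟨⟨⟨l.toCatHom, Cat.Hom.ext hl₁, Cat.Hom.ext hl₂⟩⟩⟩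

namespace Functor

variable {C D : Type*} [Category C] [Category D] {F : C ⥤ D}

theorem Isofib.surjective_obj (hF : F.Isofib) [F.EssSurj] : Function.Surjective F.obj :=
  fun d =>
    let ⟨c, _, h, _⟩ := hF _ d (F.objObjPreimageIso d)
    ⟨c, h⟩

theorem isofib_of_surjective_obj [F.Full] [F.Faithful] (hF : Function.Surjective F.obj) :
    F.Isofib := by
  intro c d v
  obtain ⟨c', rfl⟩ := hF d
  exact ⟨c', F.preimageIso v, rfl, by simp⟩

theorem isofib_and_isEquivalence_iff :
    F.Isofib ∧ F.IsEquivalence ↔ Function.Surjective F.obj ∧ F.Full ∧ F.Faithful := by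
  constructor
  · rintro ⟨hF, _⟩
    exact ⟨hF.surjective_obj, inferInstance, inferInstance⟩
  · rintro ⟨hF, _, _⟩
    have := essSurj_of_surj hF
    exact ⟨isofib_of_surjective_obj hF, {}⟩

end Functor

end CategoryTheory

namespace BoundaryTwo

abbrev of (i : Fin 3) : BoundaryTwo := i

abbrev f01 : of 0 ⟶ of 1 := Quiver.Hom.toPath BoundaryTwoEdge.f01

abbrev f12 : of 1 ⟶ of 2 := Quiver.Hom.toPath BoundaryTwoEdge.f12

abbrev f02 : of 0 ⟶ of 2 := Quiver.Hom.toPath BoundaryTwoEdge.f02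

variable {X : Type*} [Category X]

def mkFunctor {x₀ x₁ x₂ : X} (u : x₀ ⟶ x₁) (v : x₁ ⟶ x₂) (w : x₀ ⟶ x₂) : BoundaryTwo ⥤ X :=
  Paths.lift
    { obj := ![x₀, x₁, x₂]
      map := fun e =>
        match e with
        | .f01 => u
        | .f12 => v
        | .f02 => w }

section mkFunctor

variable {x₀ x₁ x₂ : X} (u : x₀ ⟶ x₁) (v : x₁ ⟶ x₂) (w : x₀ ⟶ x₂)

theorem mkFunctor_map_f01 : (mkFunctor u v w).map f01 = u := Paths.lift_toPath _ _

theorem mkFunctor_map_f12 : (mkFunctor u v w).map f12 = v := Paths.lift_toPath _ _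

theorem mkFunctor_map_f02 : (mkFunctor u v w).map f02 = w := Paths.lift_toPath _ _

end mkFunctor

end BoundaryTwo

section Boundaries

open BoundaryTwo

variable {C D : Type} [SmallCategory C] [SmallCategory D]

theorem hasLiftingProperty_boundaryZero_iff (F : C ⥤ D) :
    HasLiftingProperty boundaryZero.toCatHom F.toCatHom ↔ Function.Surjective F.obj := by
  rw [Cat.hasLiftingProperty_toCatHom_iff]
  constructor
  · intro h d
    obtain ⟨l, -, hl⟩ := h (Functor.empty C) ((Functor.const _).obj d) (Functor.empty_ext' _ _)
    exact ⟨l.obj ⟨⟨⟩⟩, Functor.congr_obj hl ⟨⟨⟩⟩⟩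
  · intro hF f g _
    obtain ⟨c, hc⟩ := hF (g.obj ⟨⟨⟩⟩)
    exact ⟨(Functor.const _).obj c, Functor.empty_ext' _ _, Discrete.functor_ext fun _ => hc⟩

theorem hasLiftingProperty_boundaryOne_iff (F : C ⥤ D) :
    HasLiftingProperty boundaryOne.toCatHom F.toCatHom ↔ F.Full := by
  rw [Cat.hasLiftingProperty_toCatHom_iff]
  constructor
  · refine fun h => ⟨fun {c₀ c₁} k => ?_⟩
    obtain ⟨l, hl, hlF⟩ := h (Discrete.functor ![c₀, c₁]) (ComposableArrows.mk₁ k)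
      (Discrete.functor_ext fun i => by fin_cases i <;> rfl)
    obtain ⟨x₀, x₁, φ, rfl⟩ := ComposableArrows.mk₁_surjective l
    obtain rfl : x₀ = c₀ := Functor.congr_obj hl ⟨0⟩
    obtain rfl : x₁ = c₁ := Functor.congr_obj hl ⟨1⟩
    exact ⟨φ, (Arrow.mk_inj _ _).1 (congrArg (fun G : ComposableArrows D 1 => Arrow.mk G.hom) hlF)⟩
  · intro _ f g w
    obtain ⟨y₀, y₁, k, rfl⟩ := ComposableArrows.mk₁_surjective g
    obtain rfl : F.obj (f.obj ⟨0⟩) = y₀ := Functor.congr_obj w ⟨0⟩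
    obtain rfl : F.obj (f.obj ⟨1⟩) = y₁ := Functor.congr_obj w ⟨1⟩
    obtain ⟨φ, rfl⟩ := F.map_surjective k
    refine ⟨ComposableArrows.mk₁ φ, Discrete.functor_ext fun i => by fin_cases i <;> rfl, ?_⟩
    -- the `eqToHom`s are identities only up to unfolding, which `simp` does not see
    exact ComposableArrows.ext₁ rfl rfl ((Category.id_comp _).trans (Category.comp_id _)).symm

theorem boundaryTwo_map_f02 : boundaryTwo.map f02 = boundaryTwo.map (f01 ≫ f12) :=
  Subsingleton.elim _ _

theorem boundaryTwo_comp_injective {X : Type*} [Category X] :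
    Function.Injective (fun l : Fin 3 ⥤ X => boundaryTwo ⋙ l) := fun _ _ h =>
  ComposableArrows.ext₂_of_arrow (congrArg (fun G => Arrow.mk (G.map f01)) h)
    (congrArg (fun G => Arrow.mk (G.map f12)) h)

theorem exists_boundaryTwo_comp_eq_iff {X : Type*} [Category X] (f : BoundaryTwo ⥤ X) :
    (∃ l : Fin 3 ⥤ X, boundaryTwo ⋙ l = f) ↔ f.map f02 = f.map f01 ≫ f.map f12 := by
  constructor
  · rintro ⟨l, rfl⟩
    simp only [Functor.comp_map, boundaryTwo_map_f02, Functor.map_comp]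
  · intro hf
    -- the `eqToHom`s below are identities only up to unfolding, which `simp` does not see
    have hid : ∀ {a b : X} (g : a ⟶ b), g = 𝟙 a ≫ g ≫ 𝟙 b := fun g => by simp
    refine ⟨ComposableArrows.mk₂ (f.map f01) (f.map f12), Paths.ext_functor ?_ ?_⟩
    · exact funext fun i : Fin 3 => by fin_cases i <;> rfl
    · rintro _ _ (_ | _ | _)
      · exact hid _
      · exact hid _
      · rw [hf]
        exact hid _

theorem hasLiftingProperty_boundaryTwo_iff (F : C ⥤ D) :
    HasLiftingProperty boundaryTwo.toCatHom F.toCatHom ↔ F.Faithful := by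
  rw [Cat.hasLiftingProperty_toCatHom_iff]
  constructor
  · refine fun h => ⟨fun {c₀ c₁ a b} hab => ?_⟩
    let f := mkFunctor a (𝟙 c₁) b
    have hfF : (f ⋙ F).map f02 = (f ⋙ F).map f01 ≫ (f ⋙ F).map f12 := by
      have : F.map b = F.map a ≫ F.map (𝟙 c₁) := by rw [F.map_id, Category.comp_id, hab]
      rwa [Functor.comp_map, Functor.comp_map, Functor.comp_map, mkFunctor_map_f01,
        mkFunctor_map_f12, mkFunctor_map_f02]
    obtain ⟨g, hg⟩ := (exists_boundaryTwo_comp_eq_iff (f ⋙ F)).2 hfF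
    obtain ⟨l, hl, -⟩ := h f g hg.symm
    have hf := (exists_boundaryTwo_comp_eq_iff f).1 ⟨l, hl⟩
    rw [mkFunctor_map_f01, mkFunctor_map_f12, mkFunctor_map_f02] at hf
    exact (hf.trans (Category.comp_id a)).symm
  · intro _ f g w
    have hf : f.map f02 = f.map f01 ≫ f.map f12 := F.map_injective (by
      simpa using (exists_boundaryTwo_comp_eq_iff (f ⋙ F)).1 ⟨g, w.symm⟩)
    obtain ⟨l, hl⟩ := (exists_boundaryTwo_comp_eq_iff f).2 hf
    exact ⟨l, hl, boundaryTwo_comp_injective (by simpa only [← Functor.assoc, hl] using w)⟩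

end Boundaries

/-- A functor between small categories is both an isofibration and an equivalence of
categories if and only if it has the right lifting property with respect to the three
boundary functors `∂₀ : ∅ → [0]`, `∂₁ : ∂[1] → [1]` and `∂₂ : ∂[2] → [2]`. -/
theorem isofibration_and_equivalence_iff_rlp_boundaries
    {C D : Type} [SmallCategory C] [SmallCategory D] (F : C ⥤ D) :
    (F.Isofib ∧ F.IsEquivalence) ↔
      (@HasLiftingProperty Cat.{0,0} _ (Cat.of (Discrete PEmpty.{1})) (Cat.of (Discrete PUnit))
          (Cat.of C) (Cat.of D) boundaryZero.toCatHom F.toCatHom ∧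
        @HasLiftingProperty Cat.{0,0} _ (Cat.of (Discrete (Fin 2))) (Cat.of (Fin 2))
          (Cat.of C) (Cat.of D) boundaryOne.toCatHom F.toCatHom ∧
        @HasLiftingProperty Cat.{0,0} _ (Cat.of BoundaryTwo) (Cat.of (Fin 3))
          (Cat.of C) (Cat.of D) boundaryTwo.toCatHom F.toCatHom) := by
  rw [Functor.isofib_and_isEquivalence_iff, hasLiftingProperty_boundaryZero_iff,
    hasLiftingProperty_boundaryOne_iff, hasLiftingProperty_boundaryTwo_iff]
end

section
/- If F : C → D is a functor that admits either a left adjoint or a right adjoint, then the induced functor Π₁(F) : Π₁(C) → Π₁(D) on localizations at all morphisms is an equivalence of groupoids. -/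
/-! Localizing at all morphisms sends `F` and its adjoint to a pair of functors between groupoids
that are again adjoint (`Adjunction.localization`). In a groupoid the unit and counit are
automatically isomorphisms, so any adjunction between groupoids is an adjoint equivalence. -/

namespace CategoryTheory

variable {C D : Type*} [Category* C] [Category* D]

lemma Functor.isEquivalence_of_isLeftAdjoint_of_isGroupoid [IsGroupoid C] [IsGroupoid D]
    (F : C ⥤ D) [F.IsLeftAdjoint] : F.IsEquivalence :=
  (Adjunction.ofIsLeftAdjoint F).toEquivalence.isEquivalence_functor

lemma Functor.isEquivalence_of_isRightAdjoint_of_isGroupoid [IsGroupoid C] [IsGroupoid D]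
    (F : C ⥤ D) [F.IsRightAdjoint] : F.IsEquivalence :=
  (Adjunction.ofIsRightAdjoint F).toEquivalence.isEquivalence_inverse

lemma MorphismProperty.top_isInvertedBy_of_isGroupoid [IsGroupoid D] (F : C ⥤ D) :
    (⊤ : MorphismProperty C).IsInvertedBy F :=
  fun _ _ _ _ => inferInstance

namespace Localization.Construction

variable {W₁ : MorphismProperty C} {W₂ : MorphismProperty D}

noncomputable instance catCommSqLift (F : C ⥤ D) (hF : W₁.IsInvertedBy (F ⋙ W₂.Q)) :
    CatCommSq F W₁.Q W₂.Q (lift (F ⋙ W₂.Q) hF) :=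
  ⟨eqToIso (fac _ hF).symm⟩

lemma isLeftAdjoint_lift (F : C ⥤ D) [F.IsLeftAdjoint] (hF : W₁.IsInvertedBy (F ⋙ W₂.Q))
    (hG : W₂.IsInvertedBy (F.rightAdjoint ⋙ W₁.Q)) : (lift (F ⋙ W₂.Q) hF).IsLeftAdjoint :=
  ((Adjunction.ofIsLeftAdjoint F).localization W₁.Q W₁ W₂.Q W₂ _ (lift _ hG)).isLeftAdjoint

lemma isRightAdjoint_lift (F : C ⥤ D) [F.IsRightAdjoint] (hF : W₁.IsInvertedBy (F ⋙ W₂.Q))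
    (hG : W₂.IsInvertedBy (F.leftAdjoint ⋙ W₁.Q)) : (lift (F ⋙ W₂.Q) hF).IsRightAdjoint :=
  ((Adjunction.ofIsRightAdjoint F).localization W₂.Q W₂ W₁.Q W₁ (lift _ hG) _).isRightAdjoint

end Localization.Construction

end CategoryTheory

open CategoryTheory

/-- If a functor `F : C ⥤ D` admits either a left adjoint or a right adjoint, then the
induced functor `Π₁(F) : Π₁(C) → Π₁(D)` between the localizations of `C` and `D` at all of
their morphisms (the functor obtained by formally inverting every arrow) is an equivalence
of groupoids. -/
theorem pi1_of_adjoint_isEquivalence {C : Type u₁} {D : Type u₂}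
    [Category.{v₁} C] [Category.{v₂} D] (F : C ⥤ D)
    (h : F.IsLeftAdjoint ∨ F.IsRightAdjoint)
    (hinv : (⊤ : MorphismProperty C).IsInvertedBy (F ⋙ (⊤ : MorphismProperty D).Q)) :
    (Localization.Construction.lift (F ⋙ (⊤ : MorphismProperty D).Q) hinv).IsEquivalence := by
  rcases h with hF | hF
  · have := Localization.Construction.isLeftAdjoint_lift F hinv
      (MorphismProperty.top_isInvertedBy_of_isGroupoid _)
    exact Functor.isEquivalence_of_isLeftAdjoint_of_isGroupoid _
  · have := Localization.Construction.isRightAdjoint_lift F hinv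
      (MorphismProperty.top_isInvertedBy_of_isGroupoid _)
    exact Functor.isEquivalence_of_isRightAdjoint_of_isGroupoid _
end

section
/- Let C be a permutative (strict symmetric monoidal) category and let F : C → Cat be a lax symmetric monoidal functor to the cartesian symmetric monoidal category of small categories. Then the Grothendieck construction (category of elements) ∫ F carries a permutative category structure, with tensor product (c₁, d₁) ⊠ (c₂, d₂) = (c₁ ⊗ c₂, λ_F(c₁,c₂)(d₁, d₂)). -/
open CategoryTheory MonoidalCategory

/-- A *permutative* (strict symmetric monoidal) category: a monoidal category whose
associativity and unit isomorphisms are identities. -/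
class Permutative (C : Type*) [Category C] [MonoidalCategory C] : Prop where
  assoc_eq : ∀ x y z : C, (x ⊗ y) ⊗ z = x ⊗ (y ⊗ z)
  associator_eqToIso : ∀ x y z : C, α_ x y z = eqToIso (assoc_eq x y z)
  unit_tensor_eq : ∀ x : C, 𝟙_ C ⊗ x = x
  leftUnitor_eqToIso : ∀ x : C, λ_ x = eqToIso (unit_tensor_eq x)
  tensor_unit_eq : ∀ x : C, x ⊗ 𝟙_ C = x
  rightUnitor_eqToIso : ∀ x : C, ρ_ x = eqToIso (tensor_unit_eq x)

variable {C : Type u} [Category.{v} C] [MonoidalCategory C] [SymmetricCategory C]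

/-- A lax symmetric monoidal structure on a functor `F : C ⥤ Cat`, where `Cat` carries the
cartesian symmetric monoidal structure: structure functors
`λ_F(c₁, c₂) : F(c₁) × F(c₂) → F(c₁ ⊗ c₂)` and a unit object, satisfying naturality and the
associativity, unit and symmetry coherences of a lax symmetric monoidal functor. -/
structure LaxSMCat (F : C ⥤ Cat.{v', u'}) where
  lax : ∀ c₁ c₂ : C, (↥(F.obj c₁) × ↥(F.obj c₂)) ⥤ ↥(F.obj (c₁ ⊗ c₂))
  unitObj : ↥(F.obj (𝟙_ C))
  natural : ∀ {c₁ c₁' c₂ c₂' : C} (f : c₁ ⟶ c₁') (g : c₂ ⟶ c₂'),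
    Functor.prod ((F.map f).toFunctor : ↥(F.obj c₁) ⥤ ↥(F.obj c₁')) ((F.map g).toFunctor : ↥(F.obj c₂) ⥤ ↥(F.obj c₂'))
        ⋙ lax c₁' c₂' =
      lax c₁ c₂ ⋙ ((F.map (f ⊗ₘ g)).toFunctor : ↥(F.obj (c₁ ⊗ c₂)) ⥤ ↥(F.obj (c₁' ⊗ c₂')))
  assoc : ∀ c₁ c₂ c₃ : C,
    Functor.prod (lax c₁ c₂) (𝟭 ↥(F.obj c₃)) ⋙ lax (c₁ ⊗ c₂) c₃ ⋙
        ((F.map (α_ c₁ c₂ c₃).hom).toFunctor : ↥(F.obj ((c₁ ⊗ c₂) ⊗ c₃)) ⥤ ↥(F.obj (c₁ ⊗ (c₂ ⊗ c₃)))) =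
      prod.associator _ _ _ ⋙ Functor.prod (𝟭 ↥(F.obj c₁)) (lax c₂ c₃) ⋙ lax c₁ (c₂ ⊗ c₃)
  left_unit : ∀ c : C,
    Functor.prod' ((Functor.const ↥(F.obj c)).obj unitObj) (𝟭 ↥(F.obj c)) ⋙ lax (𝟙_ C) c ⋙
        ((F.map (λ_ c).hom).toFunctor : ↥(F.obj (𝟙_ C ⊗ c)) ⥤ ↥(F.obj c)) =
      𝟭 ↥(F.obj c)
  right_unit : ∀ c : C,
    Functor.prod' (𝟭 ↥(F.obj c)) ((Functor.const ↥(F.obj c)).obj unitObj) ⋙ lax c (𝟙_ C) ⋙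
        ((F.map (ρ_ c).hom).toFunctor : ↥(F.obj (c ⊗ 𝟙_ C)) ⥤ ↥(F.obj c)) =
      𝟭 ↥(F.obj c)
  braided : ∀ c₁ c₂ : C,
    CategoryTheory.Prod.swap ↥(F.obj c₁) ↥(F.obj c₂) ⋙ lax c₂ c₁ =
      lax c₁ c₂ ⋙ ((F.map (β_ c₁ c₂).hom).toFunctor : ↥(F.obj (c₁ ⊗ c₂)) ⥤ ↥(F.obj (c₂ ⊗ c₁)))

/-!
The tensor product of `∫ F` is `(c₁, d₁) ⊗ (c₂, d₂) = (c₁ ⊗ c₂, λ(d₁, d₂))`, made functorial by the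
naturality of `λ`. Each structure isomorphism of `C` (associator, unitors, braiding) lifts to `∫ F`
with a fibre component that is a mere transport along an equality of objects: the associativity,
unit and symmetry axioms of `λ` say exactly that these equalities hold. Composites of such lifts
are determined by their images in `C`, so the pentagon, triangle and hexagon identities are
inherited from `C`. If `C` is permutative, its structure isomorphisms are identities, hence so are
their lifts, and `∫ F` is permutative.
-/

open CategoryTheory.Prod

namespace CategoryTheory

namespace Functor

variable {A B D : Type*} [Category A] [Category B] [Category D] (G : A × B ⥤ D)

lemma map_mkHom_comp {a a' a'' : A} {b b' b'' : B} (u : a ⟶ a') (u' : a' ⟶ a'') (v : b ⟶ b')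
    (v' : b' ⟶ b'') : G.map ((u ≫ u') ×ₘ (v ≫ v')) = G.map (u ×ₘ v) ≫ G.map (u' ×ₘ v') :=
  G.map_comp (u ×ₘ v) (u' ×ₘ v')

lemma map_mkHom_eqToHom_comp_left {x a a' : A} {b b' : B} (h : x = a) (u : a ⟶ a') (v : b ⟶ b') :
    G.map ((eqToHom h ≫ u) ×ₘ v) = eqToHom (by rw [h]) ≫ G.map (u ×ₘ v) := by
  subst h; simp

lemma map_mkHom_eqToHom_comp_right {a a' : A} {y b b' : B} (h : y = b) (u : a ⟶ a') (v : b ⟶ b') :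
    G.map (u ×ₘ (eqToHom h ≫ v)) = eqToHom (by rw [h]) ≫ G.map (u ×ₘ v) := by
  subst h; simp

lemma map_mkHom_eqToHom_left {x a : A} {b b' : B} (h : x = a) (v : b ⟶ b') :
    G.map (eqToHom h ×ₘ v) = eqToHom (by rw [h]) ≫ G.map (𝟙 a ×ₘ v) := by
  subst h; simp

lemma map_mkHom_eqToHom_right {a a' : A} {y b : B} (h : y = b) (u : a ⟶ a') :
    G.map (u ×ₘ eqToHom h) = eqToHom (by rw [h]) ≫ G.map (u ×ₘ 𝟙 b) := by
  subst h; simp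

end Functor

namespace Grothendieck

variable {B : Type*} [Category B] {F : B ⥤ Cat}

lemma obj_ext {X Y : Grothendieck F} (h₁ : X.base = Y.base)
    (h₂ : (F.map (eqToHom h₁)).toFunctor.obj X.fiber = Y.fiber) : X = Y := by
  obtain ⟨xb, xf⟩ := X
  obtain ⟨yb, yf⟩ := Y
  obtain rfl : xb = yb := h₁
  obtain rfl : xf = yf := by simpa using h₂
  rfl

def ofBase {X Y : Grothendieck F} (f : X.base ⟶ Y.base)
    (h : (F.map f).toFunctor.obj X.fiber = Y.fiber) : X ⟶ Y :=
  ⟨f, eqToHom h⟩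

lemma ofBase_congr {X Y : Grothendieck F} {f g : X.base ⟶ Y.base} (w : f = g)
    (hf : (F.map f).toFunctor.obj X.fiber = Y.fiber)
    (hg : (F.map g).toFunctor.obj X.fiber = Y.fiber) : ofBase f hf = ofBase g hg := by
  subst w; rfl

lemma id_eq_ofBase (X : Grothendieck F) : 𝟙 X = ofBase (𝟙 X.base) (by simp) := rfl

lemma ofBase_comp_ofBase {X Y Z : Grothendieck F} (f : X.base ⟶ Y.base) (g : Y.base ⟶ Z.base)
    (hf : (F.map f).toFunctor.obj X.fiber = Y.fiber)
    (hg : (F.map g).toFunctor.obj Y.fiber = Z.fiber) :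
    ofBase f hf ≫ ofBase g hg = ofBase (f ≫ g) (by simp [hf, hg]) := by
  refine Grothendieck.ext _ _ rfl ?_
  simp only [ofBase, comp_fiber, eqToHom_map]
  -- The transports produced by `Grothendieck.ext` mention unreduced bases such as `(f ≫ g).base`;
  -- once these are normalised and the equality proofs abstracted, `simp` can compose them.
  dsimp only [comp_base]
  generalize_proofs
  simp

lemma obj_map_inv_eq {c d : B} (e : c ≅ d) {x : F.obj c} {y : F.obj d}
    (h : (F.map e.hom).toFunctor.obj x = y) : (F.map e.inv).toFunctor.obj y = x := by
  rw [← h, ← Cat.Hom.comp_obj, ← F.map_comp, e.hom_inv_id, F.map_id, Cat.Hom.id_obj]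

@[simps]
def isoOfBase {X Y : Grothendieck F} (e : X.base ≅ Y.base)
    (h : (F.map e.hom).toFunctor.obj X.fiber = Y.fiber) : X ≅ Y where
  hom := ofBase e.hom h
  inv := ofBase e.inv (obj_map_inv_eq e h)
  hom_inv_id := by rw [ofBase_comp_ofBase]; exact ofBase_congr e.hom_inv_id _ _
  inv_hom_id := by rw [ofBase_comp_ofBase]; exact ofBase_congr e.inv_hom_id _ _

lemma isoOfBase_eq_eqToIso {X Y : Grothendieck F} (e : X.base ≅ Y.base)
    (h : (F.map e.hom).toFunctor.obj X.fiber = Y.fiber) (hXY : X = Y)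
    (he : e.hom = eqToHom (congrArg base hXY)) : isoOfBase e h = eqToIso hXY := by
  subst hXY
  ext
  exact ofBase_congr he _ _

end Grothendieck

end CategoryTheory

namespace Permutative

variable {M : Type*} [Category M] [MonoidalCategory M] [Permutative M]

lemma associator_hom (x y z : M) : (α_ x y z).hom = eqToHom (assoc_eq x y z) := by
  rw [associator_eqToIso, eqToIso.hom]

lemma leftUnitor_hom (x : M) : (λ_ x).hom = eqToHom (unit_tensor_eq x) := by
  rw [leftUnitor_eqToIso, eqToIso.hom]

lemma rightUnitor_hom (x : M) : (ρ_ x).hom = eqToHom (tensor_unit_eq x) := by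
  rw [rightUnitor_eqToIso, eqToIso.hom]

end Permutative

namespace LaxSMCat

open Grothendieck

variable {F : C ⥤ Cat.{v', u'}} (L : LaxSMCat F)

lemma natural_obj {c₁ c₁' c₂ c₂' : C} (f : c₁ ⟶ c₁') (g : c₂ ⟶ c₂') (d₁ : F.obj c₁)
    (d₂ : F.obj c₂) :
    (F.map (f ⊗ₘ g)).toFunctor.obj ((L.lax c₁ c₂).obj (d₁, d₂)) =
      (L.lax c₁' c₂').obj ((F.map f).toFunctor.obj d₁, (F.map g).toFunctor.obj d₂) :=
  (Functor.congr_obj (L.natural f g) (d₁, d₂)).symm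

lemma natural_map {c₁ c₁' c₂ c₂' : C} (f : c₁ ⟶ c₁') (g : c₂ ⟶ c₂') {d₁ e₁ : F.obj c₁}
    {d₂ e₂ : F.obj c₂} (u : d₁ ⟶ e₁) (v : d₂ ⟶ e₂) :
    (L.lax c₁' c₂').map ((F.map f).toFunctor.map u ×ₘ (F.map g).toFunctor.map v) =
      eqToHom (L.natural_obj f g d₁ d₂).symm ≫
        (F.map (f ⊗ₘ g)).toFunctor.map ((L.lax c₁ c₂).map (u ×ₘ v)) ≫
          eqToHom (L.natural_obj f g e₁ e₂) :=
  Functor.congr_hom (L.natural f g) (u ×ₘ v)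

lemma assoc_obj (c₁ c₂ c₃ : C) (d₁ : F.obj c₁) (d₂ : F.obj c₂) (d₃ : F.obj c₃) :
    (F.map (α_ c₁ c₂ c₃).hom).toFunctor.obj
        ((L.lax (c₁ ⊗ c₂) c₃).obj ((L.lax c₁ c₂).obj (d₁, d₂), d₃)) =
      (L.lax c₁ (c₂ ⊗ c₃)).obj (d₁, (L.lax c₂ c₃).obj (d₂, d₃)) := by
  simpa using Functor.congr_obj (L.assoc c₁ c₂ c₃) ((d₁, d₂), d₃)

lemma assoc_map {c₁ c₂ c₃ : C} {d₁ e₁ : F.obj c₁} {d₂ e₂ : F.obj c₂} {d₃ e₃ : F.obj c₃}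
    (u : d₁ ⟶ e₁) (v : d₂ ⟶ e₂) (w : d₃ ⟶ e₃) :
    (F.map (α_ c₁ c₂ c₃).hom).toFunctor.map
        ((L.lax (c₁ ⊗ c₂) c₃).map ((L.lax c₁ c₂).map (u ×ₘ v) ×ₘ w)) =
      eqToHom (L.assoc_obj c₁ c₂ c₃ d₁ d₂ d₃) ≫
        (L.lax c₁ (c₂ ⊗ c₃)).map (u ×ₘ (L.lax c₂ c₃).map (v ×ₘ w)) ≫
          eqToHom (L.assoc_obj c₁ c₂ c₃ e₁ e₂ e₃).symm :=
  Functor.congr_hom (L.assoc c₁ c₂ c₃) ((u ×ₘ v) ×ₘ w)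

lemma left_unit_obj (c : C) (d : F.obj c) :
    (F.map (λ_ c).hom).toFunctor.obj ((L.lax (𝟙_ C) c).obj (L.unitObj, d)) = d := by
  simpa using Functor.congr_obj (L.left_unit c) d

lemma left_unit_map {c : C} {d e : F.obj c} (u : d ⟶ e) :
    (F.map (λ_ c).hom).toFunctor.map ((L.lax (𝟙_ C) c).map (𝟙 L.unitObj ×ₘ u)) =
      eqToHom (L.left_unit_obj c d) ≫ u ≫ eqToHom (L.left_unit_obj c e).symm := by
  simpa using Functor.congr_hom (L.left_unit c) u

lemma right_unit_obj (c : C) (d : F.obj c) :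
    (F.map (ρ_ c).hom).toFunctor.obj ((L.lax c (𝟙_ C)).obj (d, L.unitObj)) = d := by
  simpa using Functor.congr_obj (L.right_unit c) d

lemma right_unit_map {c : C} {d e : F.obj c} (u : d ⟶ e) :
    (F.map (ρ_ c).hom).toFunctor.map ((L.lax c (𝟙_ C)).map (u ×ₘ 𝟙 L.unitObj)) =
      eqToHom (L.right_unit_obj c d) ≫ u ≫ eqToHom (L.right_unit_obj c e).symm := by
  simpa using Functor.congr_hom (L.right_unit c) u

lemma braided_obj (c₁ c₂ : C) (d₁ : F.obj c₁) (d₂ : F.obj c₂) :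
    (F.map (β_ c₁ c₂).hom).toFunctor.obj ((L.lax c₁ c₂).obj (d₁, d₂)) =
      (L.lax c₂ c₁).obj (d₂, d₁) :=
  (Functor.congr_obj (L.braided c₁ c₂) (d₁, d₂)).symm

lemma braided_map {c₁ c₂ : C} {d₁ e₁ : F.obj c₁} {d₂ e₂ : F.obj c₂} (u : d₁ ⟶ e₁)
    (v : d₂ ⟶ e₂) :
    (L.lax c₂ c₁).map (v ×ₘ u) =
      eqToHom (L.braided_obj c₁ c₂ d₁ d₂).symm ≫
        (F.map (β_ c₁ c₂).hom).toFunctor.map ((L.lax c₁ c₂).map (u ×ₘ v)) ≫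
          eqToHom (L.braided_obj c₁ c₂ e₁ e₂) :=
  Functor.congr_hom (L.braided c₁ c₂) (u ×ₘ v)

abbrev tensorObj (X Y : Grothendieck F) : Grothendieck F :=
  ⟨X.base ⊗ Y.base, (L.lax X.base Y.base).obj (X.fiber, Y.fiber)⟩

def tensorHom {X X' Y Y' : Grothendieck F} (f : X ⟶ X') (g : Y ⟶ Y') :
    L.tensorObj X Y ⟶ L.tensorObj X' Y' where
  base := f.base ⊗ₘ g.base
  fiber := eqToHom (L.natural_obj f.base g.base X.fiber Y.fiber) ≫
    (L.lax X'.base Y'.base).map (f.fiber ×ₘ g.fiber)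

lemma tensorHom_ofBase {X X' Y Y' : Grothendieck F} (f : X.base ⟶ X'.base)
    (g : Y.base ⟶ Y'.base) (hf : (F.map f).toFunctor.obj X.fiber = X'.fiber)
    (hg : (F.map g).toFunctor.obj Y.fiber = Y'.fiber) :
    L.tensorHom (ofBase f hf) (ofBase g hg) =
      ofBase (f ⊗ₘ g) (by rw [L.natural_obj, hf, hg]) := by
  refine Grothendieck.ext _ _ rfl ?_
  dsimp only [tensorHom, ofBase]
  rw [Functor.map_mkHom_eqToHom_left, Functor.map_mkHom_eqToHom_right]
  generalize_proofs
  simp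

lemma tensorHom_id (X Y : Grothendieck F) :
    L.tensorHom (𝟙 X) (𝟙 Y) = 𝟙 (L.tensorObj X Y) := by
  rw [id_eq_ofBase, id_eq_ofBase, tensorHom_ofBase, id_eq_ofBase]
  exact ofBase_congr (id_tensorHom_id _ _) _ _

lemma tensorHom_comp {X X' X'' Y Y' Y'' : Grothendieck F}
    (f : X ⟶ X') (f' : X' ⟶ X'') (g : Y ⟶ Y') (g' : Y' ⟶ Y'') :
    L.tensorHom (f ≫ f') (g ≫ g') = L.tensorHom f g ≫ L.tensorHom f' g' := by
  refine Grothendieck.ext _ _ (tensorHom_comp_tensorHom _ _ _ _).symm ?_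
  simp only [tensorHom, Grothendieck.comp_fiber]
  rw [Functor.map_mkHom_eqToHom_comp_left, Functor.map_mkHom_eqToHom_comp_right,
    Functor.map_mkHom_comp, L.natural_map]
  simp only [Functor.map_comp, eqToHom_map]
  dsimp only [Grothendieck.id_base, Grothendieck.comp_base]
  generalize_proofs
  simp

abbrev tensorUnit : Grothendieck F := ⟨𝟙_ C, L.unitObj⟩

def associator (X Y Z : Grothendieck F) :
    L.tensorObj (L.tensorObj X Y) Z ≅ L.tensorObj X (L.tensorObj Y Z) :=
  isoOfBase (α_ X.base Y.base Z.base) (L.assoc_obj _ _ _ X.fiber Y.fiber Z.fiber)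

def leftUnitor (X : Grothendieck F) : L.tensorObj L.tensorUnit X ≅ X :=
  isoOfBase (λ_ X.base) (L.left_unit_obj X.base X.fiber)

def rightUnitor (X : Grothendieck F) : L.tensorObj X L.tensorUnit ≅ X :=
  isoOfBase (ρ_ X.base) (L.right_unit_obj X.base X.fiber)

def braiding (X Y : Grothendieck F) : L.tensorObj X Y ≅ L.tensorObj Y X :=
  isoOfBase (β_ X.base Y.base) (L.braided_obj X.base Y.base X.fiber Y.fiber)

lemma associator_naturality {X₁ X₂ X₃ Y₁ Y₂ Y₃ : Grothendieck F}
    (f₁ : X₁ ⟶ Y₁) (f₂ : X₂ ⟶ Y₂) (f₃ : X₃ ⟶ Y₃) :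
    L.tensorHom (L.tensorHom f₁ f₂) f₃ ≫ (L.associator Y₁ Y₂ Y₃).hom =
      (L.associator X₁ X₂ X₃).hom ≫ L.tensorHom f₁ (L.tensorHom f₂ f₃) := by
  refine Grothendieck.ext _ _ (MonoidalCategory.associator_naturality _ _ _) ?_
  simp only [tensorHom, associator, isoOfBase, ofBase, Grothendieck.comp_fiber]
  rw [Functor.map_mkHom_eqToHom_comp_left, Functor.map_mkHom_eqToHom_comp_right]
  simp only [Functor.map_comp, eqToHom_map, L.assoc_map]
  dsimp only [Grothendieck.id_base, Grothendieck.comp_base]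
  generalize_proofs
  simp

lemma leftUnitor_naturality {X Y : Grothendieck F} (f : X ⟶ Y) :
    L.tensorHom (𝟙 L.tensorUnit) f ≫ (L.leftUnitor Y).hom = (L.leftUnitor X).hom ≫ f := by
  refine Grothendieck.ext _ _ (by simp [tensorHom, leftUnitor, isoOfBase, ofBase]) ?_
  simp only [tensorHom, leftUnitor, isoOfBase, ofBase, Grothendieck.comp_fiber,
    Grothendieck.id_fiber]
  rw [Functor.map_mkHom_eqToHom_left]
  simp only [Functor.map_comp, eqToHom_map, L.left_unit_map]
  dsimp only [Grothendieck.id_base, Grothendieck.comp_base]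
  generalize_proofs
  simp

lemma rightUnitor_naturality {X Y : Grothendieck F} (f : X ⟶ Y) :
    L.tensorHom f (𝟙 L.tensorUnit) ≫ (L.rightUnitor Y).hom = (L.rightUnitor X).hom ≫ f := by
  refine Grothendieck.ext _ _ (by simp [tensorHom, rightUnitor, isoOfBase, ofBase]) ?_
  simp only [tensorHom, rightUnitor, isoOfBase, ofBase, Grothendieck.comp_fiber,
    Grothendieck.id_fiber]
  rw [Functor.map_mkHom_eqToHom_right]
  simp only [Functor.map_comp, eqToHom_map, L.right_unit_map]
  dsimp only [Grothendieck.id_base, Grothendieck.comp_base]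
  generalize_proofs
  simp

lemma tensorHom_comp_braiding {X X' Y Y' : Grothendieck F} (f : X ⟶ X') (g : Y ⟶ Y') :
    L.tensorHom f g ≫ (L.braiding X' Y').hom = (L.braiding X Y).hom ≫ L.tensorHom g f := by
  refine Grothendieck.ext _ _ (BraidedCategory.braiding_naturality f.base g.base) ?_
  simp only [tensorHom, braiding, isoOfBase, ofBase, Grothendieck.comp_fiber]
  rw [L.braided_map]
  simp only [Functor.map_comp, eqToHom_map]
  dsimp only [Grothendieck.id_base, Grothendieck.comp_base]
  generalize_proofs
  simp

lemma pentagon (W X Y Z : Grothendieck F) :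
    L.tensorHom (L.associator W X Y).hom (𝟙 Z) ≫ (L.associator W (L.tensorObj X Y) Z).hom ≫
        L.tensorHom (𝟙 W) (L.associator X Y Z).hom =
      (L.associator (L.tensorObj W X) Y Z).hom ≫ (L.associator W X (L.tensorObj Y Z)).hom := by
  simp only [associator, isoOfBase_hom, id_eq_ofBase, tensorHom_ofBase, ofBase_comp_ofBase]
  exact ofBase_congr (by simp) _ _

lemma triangle (X Y : Grothendieck F) :
    (L.associator X L.tensorUnit Y).hom ≫ L.tensorHom (𝟙 X) (L.leftUnitor Y).hom =
      L.tensorHom (L.rightUnitor X).hom (𝟙 Y) := by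
  simp only [associator, leftUnitor, rightUnitor, isoOfBase_hom, id_eq_ofBase, tensorHom_ofBase,
    ofBase_comp_ofBase]
  exact ofBase_congr (by simp) _ _

lemma hexagon_forward (X Y Z : Grothendieck F) :
    (L.associator X Y Z).hom ≫ (L.braiding X (L.tensorObj Y Z)).hom ≫
        (L.associator Y Z X).hom =
      L.tensorHom (L.braiding X Y).hom (𝟙 Z) ≫ (L.associator Y X Z).hom ≫
        L.tensorHom (𝟙 Y) (L.braiding X Z).hom := by
  simp only [associator, braiding, isoOfBase_hom, id_eq_ofBase, tensorHom_ofBase,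
    ofBase_comp_ofBase]
  exact ofBase_congr (by simp) _ _

lemma hexagon_reverse (X Y Z : Grothendieck F) :
    (L.associator X Y Z).inv ≫ (L.braiding (L.tensorObj X Y) Z).hom ≫
        (L.associator Z X Y).inv =
      L.tensorHom (𝟙 X) (L.braiding Y Z).hom ≫ (L.associator X Z Y).inv ≫
        L.tensorHom (L.braiding X Z).hom (𝟙 Y) := by
  simp only [associator, braiding, isoOfBase_hom, isoOfBase_inv, id_eq_ofBase, tensorHom_ofBase,
    ofBase_comp_ofBase]
  exact ofBase_congr (by simp) _ _

lemma braiding_hom_comp_braiding_hom (X Y : Grothendieck F) :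
    (L.braiding X Y).hom ≫ (L.braiding Y X).hom = 𝟙 (L.tensorObj X Y) := by
  rw [braiding, braiding, isoOfBase_hom, isoOfBase_hom, ofBase_comp_ofBase, id_eq_ofBase]
  exact ofBase_congr (SymmetricCategory.symmetry _ _) _ _

@[reducible]
def monoidalCategoryStruct : MonoidalCategoryStruct (Grothendieck F) where
  tensorObj := L.tensorObj
  whiskerLeft X _ _ g := L.tensorHom (𝟙 X) g
  whiskerRight f Y := L.tensorHom f (𝟙 Y)
  tensorHom := L.tensorHom
  tensorUnit := L.tensorUnit
  associator := L.associator
  leftUnitor := L.leftUnitor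
  rightUnitor := L.rightUnitor

@[reducible]
def monoidalCategory : MonoidalCategory (Grothendieck F) :=
  letI := L.monoidalCategoryStruct
  .ofTensorHom (id_tensorHom_id := L.tensorHom_id) (id_tensorHom := fun _ _ _ _ => rfl)
    (tensorHom_id := fun _ _ => rfl)
    (tensorHom_comp_tensorHom := fun f₁ f₂ g₁ g₂ => (L.tensorHom_comp f₁ g₁ f₂ g₂).symm)
    (associator_naturality := L.associator_naturality)
    (leftUnitor_naturality := L.leftUnitor_naturality)
    (rightUnitor_naturality := L.rightUnitor_naturality)
    (pentagon := L.pentagon) (triangle := L.triangle)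

@[reducible]
def symmetricCategory : @SymmetricCategory _ _ L.monoidalCategory :=
  letI := L.monoidalCategory
  { braiding := L.braiding
    braiding_naturality_right := fun X _ _ f => L.tensorHom_comp_braiding (𝟙 X) f
    braiding_naturality_left := fun f Z => L.tensorHom_comp_braiding f (𝟙 Z)
    hexagon_forward := L.hexagon_forward
    hexagon_reverse := L.hexagon_reverse
    symmetry := L.braiding_hom_comp_braiding_hom }

section Permutative

variable [Permutative C]

lemma tensorObj_assoc (X Y Z : Grothendieck F) :
    L.tensorObj (L.tensorObj X Y) Z = L.tensorObj X (L.tensorObj Y Z) := by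
  refine obj_ext (Permutative.assoc_eq X.base Y.base Z.base) ?_
  simpa [Permutative.associator_hom] using L.assoc_obj _ _ _ X.fiber Y.fiber Z.fiber

lemma tensorUnit_tensorObj (X : Grothendieck F) : L.tensorObj L.tensorUnit X = X := by
  refine obj_ext (Permutative.unit_tensor_eq X.base) ?_
  simpa [Permutative.leftUnitor_hom] using L.left_unit_obj X.base X.fiber

lemma tensorObj_tensorUnit (X : Grothendieck F) : L.tensorObj X L.tensorUnit = X := by
  refine obj_ext (Permutative.tensor_unit_eq X.base) ?_
  simpa [Permutative.rightUnitor_hom] using L.right_unit_obj X.base X.fiber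

theorem permutative : @Permutative _ _ L.monoidalCategory :=
  letI := L.monoidalCategory
  { assoc_eq := L.tensorObj_assoc
    associator_eqToIso := fun X Y Z =>
      isoOfBase_eq_eqToIso _ _ _ (Permutative.associator_hom X.base Y.base Z.base)
    unit_tensor_eq := L.tensorUnit_tensorObj
    leftUnitor_eqToIso := fun X => isoOfBase_eq_eqToIso _ _ _ (Permutative.leftUnitor_hom X.base)
    tensor_unit_eq := L.tensorObj_tensorUnit
    rightUnitor_eqToIso := fun X =>
      isoOfBase_eq_eqToIso _ _ _ (Permutative.rightUnitor_hom X.base) }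

end Permutative

end LaxSMCat

/-- Let `C` be a permutative category and `F : C → Cat` a lax symmetric monoidal functor to
the cartesian symmetric monoidal category of small categories. Then the Grothendieck
construction (category of elements) `∫ F` carries a permutative (strict symmetric monoidal)
category structure whose tensor product is given by
`(c₁, d₁) ⊠ (c₂, d₂) = (c₁ ⊗ c₂, λ_F(c₁, c₂)(d₁, d₂))`. -/
theorem grothendieck_of_laxSM_is_permutative [Permutative C]
    (F : C ⥤ Cat.{v', u'}) (L : LaxSMCat F) :
    ∃ (M : MonoidalCategory (Grothendieck F)) (_ : @SymmetricCategory _ _ M),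
      (@Permutative _ _ M) ∧
      ∀ X Y : Grothendieck F,
        (@MonoidalCategoryStruct.tensorObj _ _ M.toMonoidalCategoryStruct X Y) =
          ⟨X.base ⊗ Y.base, (L.lax X.base Y.base).obj (X.fiber, Y.fiber)⟩ :=
  ⟨L.monoidalCategory, L.symmetricCategory, L.permutative, fun _ _ => rfl⟩
end

section
/- For each n ∈ ℕ, the inclusion functor from the free permutative category on n copies of L(1) into L(n), induced by the n projections δⁿ_k : n⁺ → 1⁺, is an equivalence of categories which is injective on objects; in particular every object of L(n) is isomorphic to one in the image. -/
open CategoryTheory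

/-- An object of the permutative groupoid `L(n)`: a finite sequence `(S₁, ..., S_r)` of
subsets of `{1, ..., n}`. -/
def LObj (n : ℕ) : Type := List (Finset (Fin n))

/-- The disjoint union `S₁ ⊔ ... ⊔ S_r` of the members of a sequence of subsets of
`{1, ..., n}`. -/
def LTot {n : ℕ} (S : LObj n) : Type :=
  Σ i : Fin (List.length S), {x : Fin n // x ∈ S.get i}

/-- The canonical inclusion `S₁ ⊔ ... ⊔ S_r → {1, ..., n}`. -/
def LTot.val {n : ℕ} {S : LObj n} (z : LTot S) : Fin n := z.2.1

/-- A morphism `(S₁, ..., S_r) → (T₁, ..., T_k)` in `L(n)`: a bijection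
`S₁ ⊔ ... ⊔ S_r ≃ T₁ ⊔ ... ⊔ T_k` commuting with the canonical inclusions into
`{1, ..., n}`. -/
def LHom {n : ℕ} (S T : LObj n) : Type :=
  {e : LTot S ≃ LTot T // ∀ z : LTot S, (e z).val = z.val}

instance (n : ℕ) : Category (LObj n) where
  Hom := LHom
  id S := ⟨Equiv.refl _, fun _ => rfl⟩
  comp e f := ⟨e.1.trans f.1, fun z => (f.2 (e.1 z)).trans (e.2 z)⟩
  id_comp := by intros; apply Subtype.ext; apply Equiv.ext; intro; rfl
  comp_id := by intros; apply Subtype.ext; apply Equiv.ext; intro; rfl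
  assoc := by intros; apply Subtype.ext; apply Equiv.ext; intro; rfl

/-- The objects of the coproduct `⋁ₖ L(1)` (the free permutative category on `n` copies of
`L(1)`, included in `L(n)` via the `n` projections `δⁿ_k : n⁺ → 1⁺`): the finite sequences
all of whose members are empty or singleton subsets of `{1, ..., n}`. -/
def IsSmallObj {n : ℕ} (S : LObj n) : Prop :=
  ∀ i : Fin (List.length S), Finset.card (S.get i) ≤ 1

/-!
An object `S` of `L(n)` is determined up to isomorphism by the multiplicities with which the
points of `{1, ..., n}` are covered: if the fibres of the canonical inclusions of `S` and `T`
are equinumerous, fibrewise bijections glue to a bijection `S₁ ⊔ ... ⊔ S_r ≃ T₁ ⊔ ... ⊔ T_k`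
over `{1, ..., n}`. Splitting every `Sᵢ` into the singletons of its elements preserves these
multiplicities and yields a sequence of singleton-or-empty sets, so the inclusion of the full
subcategory `⋁ₖ L(1)` is essentially surjective; being a full subcategory inclusion it is fully
faithful and injective on objects.
-/

theorem List.card_subtype_get_eq_countP {α : Type*} (l : List α) (p : α → Prop)
    [DecidablePred p] :
    Fintype.card {i : Fin l.length // p (l.get i)} = l.countP (fun a => decide (p a)) := by
  conv_rhs => rw [← List.map_get_finRange l, List.countP_map]
  rw [Fintype.card_subtype, Fin.univ_def]
  simp [Finset.filter, List.countP_eq_length_filter, Function.comp_def]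

theorem Finset.countP_mem_toList_map_singleton {α : Type*} [DecidableEq α] (s : Finset α)
    (x : α) :
    (s.toList.map singleton).countP (fun t : Finset α => decide (x ∈ t)) =
      if x ∈ s then 1 else 0 := by
  have hcount := Multiset.count_eq_of_nodup (a := x) s.nodup
  rw [← Finset.coe_toList, Multiset.coe_count, List.count_eq_countP] at hcount
  simpa [List.countP_map, Function.comp_def, eq_comm (a := x), beq_eq_decide] using hcount

namespace List

variable {α : Type*}

noncomputable def flatSingletons (S : List (Finset α)) : List (Finset α) :=
  S.flatMap fun s => s.toList.map singleton

theorem card_le_one_of_mem_flatSingletons {S : List (Finset α)} {t : Finset α}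
    (ht : t ∈ S.flatSingletons) : t.card ≤ 1 := by
  obtain ⟨s, -, hs⟩ := mem_flatMap.1 ht
  obtain ⟨x, -, rfl⟩ := mem_map.1 hs
  exact (Finset.card_singleton x).le

theorem countP_mem_flatSingletons [DecidableEq α] (S : List (Finset α)) (x : α) :
    S.flatSingletons.countP (fun t => decide (x ∈ t)) = S.countP fun t => decide (x ∈ t) := by
  induction S with
  | nil => rfl
  | cons s S ih =>
    rw [flatSingletons, flatMap_cons, countP_append, ← flatSingletons,
      Finset.countP_mem_toList_map_singleton, ih, countP_cons, add_comm]
    simp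

end List

instance {n : ℕ} (S : LObj n) : Fintype (LTot S) :=
  inferInstanceAs (Fintype (Σ i : Fin S.length, {x : Fin n // x ∈ S.get i}))

def LTot.fiberEquiv {n : ℕ} (S : LObj n) (x : Fin n) :
    {z : LTot S // z.val = x} ≃ {i : Fin S.length // x ∈ S.get i} where
  toFun | ⟨⟨i, _, hy⟩, h⟩ => ⟨i, h ▸ hy⟩
  invFun i := ⟨⟨i.1, x, i.2⟩, rfl⟩
  left_inv := by rintro ⟨⟨i, y, hy⟩, rfl⟩; rfl
  right_inv _ := rfl

theorem LTot.card_fiber {n : ℕ} (S : LObj n) (x : Fin n) :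
    Fintype.card {z : LTot S // z.val = x} = S.countP fun s => decide (x ∈ s) :=
  (Fintype.card_congr (LTot.fiberEquiv S x)).trans (List.card_subtype_get_eq_countP S (x ∈ ·))

namespace LObj

variable {n : ℕ}

noncomputable def isoOfCardFiber {S T : LObj n}
    (h : ∀ x : Fin n, Fintype.card {z : LTot S // z.val = x}
      = Fintype.card {z : LTot T // z.val = x}) : S ≅ T :=
  let e : LTot S ≃ LTot T :=
    (Equiv.sigmaFiberEquiv LTot.val).symm.trans <|
      (Equiv.sigmaCongrRight fun x => Fintype.equivOfCardEq (h x)).trans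
        (Equiv.sigmaFiberEquiv LTot.val)
  have he : ∀ z, (e z).val = z.val := fun z => (Fintype.equivOfCardEq (h z.val) ⟨z, rfl⟩).2
  { hom := ⟨e, he⟩
    inv := ⟨e.symm, fun z => by rw [← he (e.symm z), Equiv.apply_symm_apply]⟩
    hom_inv_id := Subtype.ext e.self_trans_symm
    inv_hom_id := Subtype.ext e.symm_trans_self }

theorem isSmallObj_flatSingletons (S : LObj n) : IsSmallObj (List.flatSingletons S) :=
  fun i => List.card_le_one_of_mem_flatSingletons (List.get_mem _ i)

noncomputable def flatSingletonsObj (S : LObj n) :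
    ObjectProperty.FullSubcategory (@IsSmallObj n) :=
  ⟨List.flatSingletons S, isSmallObj_flatSingletons S⟩

noncomputable def flatSingletonsObjIso (S : LObj n) : (flatSingletonsObj S).obj ≅ S :=
  isoOfCardFiber fun x => (LTot.card_fiber _ x).trans <|
    (List.countP_mem_flatSingletons S x).trans (LTot.card_fiber S x).symm

end LObj

/-- For each `n`, the inclusion functor from the free permutative category on `n` copies of
`L(1)` (realized as the full subcategory of `L(n)` on sequences of singleton-or-empty
subsets) into `L(n)`, induced by the `n` projections `δⁿ_k : n⁺ → 1⁺`, is an equivalence of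
categories which is injective on objects; in particular every object of `L(n)` is isomorphic
to one in its image. -/
theorem coproduct_inclusion_into_Ln_is_equivalence (n : ℕ) :
    (ObjectProperty.ι (@IsSmallObj n)).IsEquivalence ∧
    Function.Injective (ObjectProperty.ι (@IsSmallObj n)).obj ∧
    ∀ S : LObj n, ∃ T : ObjectProperty.FullSubcategory (@IsSmallObj n),
      Nonempty ((ObjectProperty.ι (@IsSmallObj n)).obj T ≅ S) := by
  have essImage (S : LObj n) : ∃ T : ObjectProperty.FullSubcategory (@IsSmallObj n),
      Nonempty ((ObjectProperty.ι (@IsSmallObj n)).obj T ≅ S) :=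
    ⟨LObj.flatSingletonsObj S, ⟨LObj.flatSingletonsObjIso S⟩⟩
  refine ⟨{ essSurj := ⟨essImage⟩ }, fun T U h => ObjectProperty.FullSubcategory.ext h, essImage⟩
end
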